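/- There exists a constant C > 0, independent of α, β and τ, with the following property. Let α, β, τ > 0, let u : ℝ → ℝ be continuous, affine on each interval [kτ, (k+1)τ] (k ∈ ℤ), belonging to L²(ℝ) with finite Slobodetski H^{1/2} seminorm, and let v be its upwinded interpolant: v is continuous, v(kτ) = u(kτ) for all k ∈ ℤ, and on each interval [kτ, (k+1)τ] of the form v(t) = c₁ + c₂ exp(−βt/α). Then |v|_{H^{1/2}_w} ≤ C |u|_{H^{1/2}}, i.e. ‖v − v(· − y)‖_{L²(ℝ)} ≤ C |y|^{1/2} |u|_{H^{1/2}} for all y ∈ ℝ. -/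

import Mathlib

open MeasureTheory

/-- Squared Slobodetski `H^{1/2}` seminorm on `ℝ`. -/
noncomputable def slobHalfSq (u : ℝ → ℝ) : ENNReal :=
  ∫⁻ x : ℝ, ∫⁻ y : ℝ, ENNReal.ofReal ((u x - u y) ^ 2 / |x - y| ^ 2)

/-- `u` is affine on each interval `[kτ, (k+1)τ]`, `k ∈ ℤ`. -/
def PWAffineZ (τ : ℝ) (u : ℝ → ℝ) : Prop :=
  ∀ k : ℤ, ∃ c₁ c₂ : ℝ,
    ∀ t ∈ Set.Icc ((k : ℝ) * τ) (((k : ℝ) + 1) * τ), u t = c₁ + c₂ * t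

/-- `v` is of the upwinded form `c₁ + c₂ exp(−βt/α)` on each interval
`[kτ, (k+1)τ]`, `k ∈ ℤ`. -/
def UpwindZ (α β τ : ℝ) (v : ℝ → ℝ) : Prop :=
  ∀ k : ℤ, ∃ c₁ c₂ : ℝ,
    ∀ t ∈ Set.Icc ((k : ℝ) * τ) (((k : ℝ) + 1) * τ),
      v t = c₁ + c₂ * Real.exp (-(β * t) / α)

/-!
Write `Δₖ = u((k+1)τ) - u(kτ)` and `D = ∑ₖ Δₖ²`. On each cell `u - u(· - τ)` is affine with end
values `Δₖ₋₁` and `Δₖ`, so `τ D ≤ 3 ‖u - u(· - τ)‖²`; and since `‖w - w(· - y)‖²` is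
subadditive up to a factor `2`, averaging over the shifts in `(0, y)` gives
`‖u - u(· - y)‖² ≤ 4 y |u|²_{H^{1/2}}`. Hence `D ≤ 12 |u|²_{H^{1/2}}`.

The upwinded interpolant `v` is monotone on every cell and agrees with `u` at the nodes. For a
shift `y ≤ τ` this bounds `‖v - v(· - y)‖²` cell by cell by `5 y D`: on a strip of width `y` at
the left end of a cell the difference crosses one node, and on the rest of the cell the difference
of a monotone function integrates to the difference of two end strips.
For `y > τ` one compares `v` with `u` instead, using `‖v - u‖² ≤ τ D`.
-/

open Set
open scoped ENNReal

noncomputable def shiftDiffSq (w : ℝ → ℝ) (y : ℝ) : ℝ≥0∞ :=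
  ∫⁻ x, ENNReal.ofReal ((w x - w (x - y)) ^ 2)

section ShiftDiffSq

variable {u w : ℝ → ℝ}

theorem shiftDiffSq_neg (w : ℝ → ℝ) (y : ℝ) : shiftDiffSq w (-y) = shiftDiffSq w y := by
  rw [shiftDiffSq, shiftDiffSq,
    ← lintegral_add_right_eq_self (fun x => ENNReal.ofReal ((w x - w (x - y)) ^ 2)) y]
  congr 1
  funext x
  rw [sub_neg_eq_add, add_sub_cancel_right, sub_sq_comm]

theorem shiftDiffSq_abs (w : ℝ → ℝ) (y : ℝ) : shiftDiffSq w |y| = shiftDiffSq w y := by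
  rcases abs_choice y with h | h <;> rw [h]
  exact shiftDiffSq_neg w y

theorem measurable_shiftDiffSq (hw : Measurable w) : Measurable (shiftDiffSq w) := by
  refine Measurable.lintegral_prod_right (f := fun y x => ENNReal.ofReal ((w x - w (x - y)) ^ 2)) ?_
  exact (((hw.comp measurable_snd).sub (hw.comp (measurable_snd.sub measurable_fst))).pow_const
    2).ennreal_ofReal

theorem ENNReal.ofReal_sq_add_le (a b : ℝ) :
    ENNReal.ofReal ((a + b) ^ 2) ≤ 2 * ENNReal.ofReal (a ^ 2) + 2 * ENNReal.ofReal (b ^ 2) := by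
  rw [← ENNReal.ofReal_ofNat 2, ← ENNReal.ofReal_mul zero_le_two, ← ENNReal.ofReal_mul zero_le_two,
    ← ENNReal.ofReal_add (by positivity) (by positivity)]
  exact ENNReal.ofReal_le_ofReal (by nlinarith [sq_nonneg (a - b)])

theorem lintegral_ofReal_sq_add_le {f g : ℝ → ℝ} (hf : Measurable f) :
    ∫⁻ x, ENNReal.ofReal ((f x + g x) ^ 2)
      ≤ 2 * (∫⁻ x, ENNReal.ofReal (f x ^ 2)) + 2 * ∫⁻ x, ENNReal.ofReal (g x ^ 2) := by
  rw [← lintegral_const_mul' _ _ ENNReal.ofNat_ne_top, ← lintegral_const_mul' _ _ ENNReal.ofNat_ne_top,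
    ← lintegral_add_left ((hf.pow_const 2).ennreal_ofReal.const_mul 2)]
  exact lintegral_mono fun x => ENNReal.ofReal_sq_add_le (f x) (g x)

theorem shiftDiffSq_le_two_mul_add_two_mul (hw : Measurable w) (y h : ℝ) :
    shiftDiffSq w y ≤ 2 * shiftDiffSq w h + 2 * shiftDiffSq w (y - h) := by
  have hsplit := lintegral_ofReal_sq_add_le (f := fun x => w x - w (x - h))
    (g := fun x => w (x - h) - w (x - h - (y - h))) (hw.sub (hw.comp (measurable_sub_const h)))
  rw [lintegral_sub_right_eq_self (fun x => ENNReal.ofReal ((w x - w (x - (y - h))) ^ 2)) h]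
    at hsplit
  simpa only [shiftDiffSq, sub_sub_sub_cancel_right, sub_add_sub_cancel] using hsplit

theorem shiftDiffSq_add_le (hu : Measurable u) (w : ℝ → ℝ) (y : ℝ) :
    shiftDiffSq (u + w) y ≤ 2 * shiftDiffSq u y + 2 * shiftDiffSq w y := by
  have hsplit := lintegral_ofReal_sq_add_le (f := fun x => u x - u (x - y))
    (g := fun x => w x - w (x - y)) (hu.sub (hu.comp (measurable_sub_const y)))
  simpa only [shiftDiffSq, Pi.add_apply, add_sub_add_comm] using hsplit

theorem shiftDiffSq_le_four_mul (hw : Measurable w) (y : ℝ) :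
    shiftDiffSq w y ≤ 4 * ∫⁻ x, ENNReal.ofReal (w x ^ 2) := by
  have hsplit := lintegral_ofReal_sq_add_le (f := w) (g := fun x => -w (x - y)) hw
  simp only [← sub_eq_add_neg, neg_sq] at hsplit
  rw [lintegral_sub_right_eq_self (fun x => ENNReal.ofReal (w x ^ 2)) y] at hsplit
  calc shiftDiffSq w y ≤ _ := hsplit
    _ = _ := by ring

end ShiftDiffSq

section Slobodetski

variable {u w : ℝ → ℝ}

theorem slobHalfSq_eq_lintegral_shiftDiffSq_div (hu : Measurable u) :
    slobHalfSq u = ∫⁻ h, shiftDiffSq u h / ENNReal.ofReal (h ^ 2) := by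
  have hmeas : Measurable (Function.uncurry fun x h : ℝ =>
      ENNReal.ofReal ((u x - u (x - h)) ^ 2 / h ^ 2)) := by
    fun_prop
  calc slobHalfSq u = ∫⁻ x, ∫⁻ h, ENNReal.ofReal ((u x - u (x - h)) ^ 2 / h ^ 2) := by
        refine lintegral_congr fun x => ?_
        rw [← lintegral_sub_left_eq_self _ x]
        simp only [sub_sub_cancel, sq_abs]
    _ = ∫⁻ h, ∫⁻ x, ENNReal.ofReal ((u x - u (x - h)) ^ 2 / h ^ 2) :=
        lintegral_lintegral_swap hmeas.aemeasurable
    _ = ∫⁻ h, shiftDiffSq u h / ENNReal.ofReal (h ^ 2) := by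
        refine lintegral_congr fun h => ?_
        rcases eq_or_ne h 0 with rfl | hh
        · simp [shiftDiffSq]
        · have hpos : (0 : ℝ) < h ^ 2 := by positivity
          rw [shiftDiffSq, div_eq_mul_inv, ← lintegral_mul_const' _ _ (by simpa using hh)]
          exact lintegral_congr fun x => by rw [ENNReal.ofReal_div_of_pos hpos, div_eq_mul_inv]

theorem ofReal_mul_shiftDiffSq_le (hw : Measurable w) (y : ℝ) :
    ENNReal.ofReal y * shiftDiffSq w y ≤ 4 * ∫⁻ h in Ioo 0 y, shiftDiffSq w h := by
  have hg := measurable_shiftDiffSq hw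
  have hreflect : ∫⁻ h in Ioo 0 y, shiftDiffSq w (y - h) = ∫⁻ h in Ioo 0 y, shiftDiffSq w h := by
    have := (Measure.measurePreserving_sub_left volume y).setLIntegral_comp_preimage_emb
      (Homeomorph.subLeft y).measurableEmbedding (shiftDiffSq w) (Ioo 0 y)
    rwa [preimage_const_sub_Ioo, sub_self, sub_zero] at this
  calc ENNReal.ofReal y * shiftDiffSq w y = ∫⁻ _ in Ioo 0 y, shiftDiffSq w y := by
        rw [setLIntegral_const, Real.volume_Ioo, sub_zero, mul_comm]
    _ ≤ ∫⁻ h in Ioo 0 y, (2 * shiftDiffSq w h + 2 * shiftDiffSq w (y - h)) :=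
        lintegral_mono fun h => shiftDiffSq_le_two_mul_add_two_mul hw y h
    _ = 4 * ∫⁻ h in Ioo 0 y, shiftDiffSq w h := by
        rw [lintegral_add_left (hg.const_mul 2), lintegral_const_mul' _ _ ENNReal.ofNat_ne_top,
          lintegral_const_mul' _ _ ENNReal.ofNat_ne_top, hreflect]
        ring

theorem setLIntegral_Ioo_shiftDiffSq_le (hu : Measurable u) (y : ℝ) :
    ∫⁻ h in Ioo 0 y, shiftDiffSq u h ≤ ENNReal.ofReal (y ^ 2) * slobHalfSq u := by
  calc ∫⁻ h in Ioo 0 y, shiftDiffSq u h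
      ≤ ∫⁻ h in Ioo 0 y, ENNReal.ofReal (y ^ 2) * (shiftDiffSq u h / ENNReal.ofReal (h ^ 2)) := by
        refine setLIntegral_mono' measurableSet_Ioo fun h ⟨h0, hy⟩ => ?_
        have hpos : ENNReal.ofReal (h ^ 2) ≠ 0 := by simpa using h0.ne'
        calc shiftDiffSq u h
            = shiftDiffSq u h / ENNReal.ofReal (h ^ 2) * ENNReal.ofReal (h ^ 2) :=
              (ENNReal.div_mul_cancel hpos ENNReal.ofReal_ne_top).symm
          _ ≤ shiftDiffSq u h / ENNReal.ofReal (h ^ 2) * ENNReal.ofReal (y ^ 2) :=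
              mul_le_mul_right (ENNReal.ofReal_le_ofReal (by nlinarith)) _
          _ = _ := mul_comm _ _
    _ = ENNReal.ofReal (y ^ 2) * ∫⁻ h in Ioo 0 y, shiftDiffSq u h / ENNReal.ofReal (h ^ 2) :=
        lintegral_const_mul' _ _ ENNReal.ofReal_ne_top
    _ ≤ ENNReal.ofReal (y ^ 2) * slobHalfSq u := by
        rw [slobHalfSq_eq_lintegral_shiftDiffSq_div hu]
        exact mul_le_mul_right (setLIntegral_le_lintegral _ _) _

theorem shiftDiffSq_le_mul_slobHalfSq (hu : Measurable u) {y : ℝ} (hy : 0 < y) :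
    shiftDiffSq u y ≤ 4 * ENNReal.ofReal y * slobHalfSq u := by
  refine (ENNReal.mul_le_mul_iff_right (by simpa using hy) ENNReal.ofReal_ne_top).1 ?_
  calc ENNReal.ofReal y * shiftDiffSq u y ≤ 4 * ∫⁻ h in Ioo 0 y, shiftDiffSq u h :=
        ofReal_mul_shiftDiffSq_le hu y
    _ ≤ 4 * (ENNReal.ofReal (y ^ 2) * slobHalfSq u) := by
        gcongr
        exact setLIntegral_Ioo_shiftDiffSq_le hu y
    _ = ENNReal.ofReal y * (4 * ENNReal.ofReal y * slobHalfSq u) := by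
        rw [sq, ENNReal.ofReal_mul hy.le]
        ring

end Slobodetski

def MonotoneOrAntitoneOn (w : ℝ → ℝ) (s : Set ℝ) : Prop :=
  MonotoneOn w s ∨ AntitoneOn w s

theorem sq_sub_le_sq_sub_of_mem_uIcc {a b p q : ℝ} (hp : p ∈ uIcc a b) (hq : q ∈ uIcc a b) :
    (p - q) ^ 2 ≤ (b - a) ^ 2 :=
  sq_le_sq.2 (abs_sub_le_of_uIcc_subset_uIcc (uIcc_subset_uIcc hq hp))

theorem MonotoneOrAntitoneOn.mem_uIcc {w : ℝ → ℝ} {a b t : ℝ}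
    (hw : MonotoneOrAntitoneOn w (Icc a b)) (ht : t ∈ Icc a b) : w t ∈ uIcc (w a) (w b) := by
  rcases hw with hw | hw
  · exact Icc_subset_uIcc (hw.mapsTo_Icc ht)
  · exact Icc_subset_uIcc' (hw.mapsTo_Icc ht)

theorem MonotoneOn.integral_sq_sub_comp_sub_le {w : ℝ → ℝ} {a b z : ℝ} (hw : Continuous w)
    (hmono : MonotoneOn w (Icc a b)) (hz : 0 ≤ z) (hzb : z ≤ b - a) :
    ∫ x in (a + z)..b, (w x - w (x - z)) ^ 2 ≤ z * (w b - w a) ^ 2 := by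
  have hint : ∀ c d : ℝ, IntervalIntegrable w volume c d := fun c d => hw.intervalIntegrable c d
  have hincr : ∀ x ∈ Icc (a + z) b, 0 ≤ w x - w (x - z) ∧ w x - w (x - z) ≤ w b - w a := by
    intro x ⟨hax, hxb⟩
    have hx : x ∈ Icc a b := ⟨by linarith, hxb⟩
    have hxz : x - z ∈ Icc a b := ⟨by linarith, by linarith⟩
    exact ⟨sub_nonneg.2 (hmono hxz hx (by linarith)),
      sub_le_sub (hmono hx ⟨by linarith, le_rfl⟩ hxb) (hmono ⟨le_rfl, by linarith⟩ hxz (by linarith))⟩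
  have htelescope : ∫ x in (a + z)..b, (w x - w (x - z))
      = (∫ x in (b - z)..b, w x) - ∫ x in a..(a + z), w x := by
    rw [intervalIntegral.integral_sub (hint _ _)
        (Continuous.intervalIntegrable (u := fun x => w (x - z)) (by fun_prop) _ _),
      intervalIntegral.integral_comp_sub_right, add_sub_cancel_right]
    linarith [intervalIntegral.integral_add_adjacent_intervals (hint a (a + z)) (hint (a + z) b),
      intervalIntegral.integral_add_adjacent_intervals (hint a (b - z)) (hint (b - z) b)]
  have hupper : ∫ x in (b - z)..b, w x ≤ z * w b := by
    have := intervalIntegral.integral_mono_on (by linarith) (hint (b - z) b)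
      (intervalIntegrable_const (c := w b)) fun x hx =>
        hmono ⟨by linarith [hx.1], hx.2⟩ ⟨by linarith, le_rfl⟩ hx.2
    simpa using this
  have hlower : z * w a ≤ ∫ x in a..(a + z), w x := by
    have := intervalIntegral.integral_mono_on (by linarith) (intervalIntegrable_const (c := w a))
      (hint a (a + z)) fun x hx =>
        hmono ⟨le_rfl, by linarith⟩ ⟨hx.1, by linarith [hx.2]⟩ hx.1
    simpa using this
  calc ∫ x in (a + z)..b, (w x - w (x - z)) ^ 2
      ≤ ∫ x in (a + z)..b, (w b - w a) * (w x - w (x - z)) := by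
        refine intervalIntegral.integral_mono_on (by linarith)
          (Continuous.intervalIntegrable (by fun_prop) _ _)
          (Continuous.intervalIntegrable (by fun_prop) _ _) fun x hx => ?_
        nlinarith [hincr x hx]
    _ = (w b - w a) * ((∫ x in (b - z)..b, w x) - ∫ x in a..(a + z), w x) := by
        rw [intervalIntegral.integral_const_mul, htelescope]
    _ ≤ (w b - w a) * (z * w b - z * w a) := by
        gcongr
        linarith [(hincr b ⟨by linarith, le_rfl⟩).1, (hincr b ⟨by linarith, le_rfl⟩).2]
    _ = z * (w b - w a) ^ 2 := by ring

theorem MonotoneOrAntitoneOn.integral_sq_sub_comp_sub_le {w : ℝ → ℝ} {a b z : ℝ}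
    (hw : Continuous w) (hmono : MonotoneOrAntitoneOn w (Icc a b)) (hz : 0 ≤ z)
    (hzb : z ≤ b - a) :
    ∫ x in (a + z)..b, (w x - w (x - z)) ^ 2 ≤ z * (w b - w a) ^ 2 := by
  rcases hmono with hmono | hanti
  · exact hmono.integral_sq_sub_comp_sub_le hw hz hzb
  · simpa only [Pi.neg_apply, neg_sub_neg, sub_sq_comm] using
      hanti.neg.integral_sq_sub_comp_sub_le hw.neg hz hzb

theorem MonotoneOrAntitoneOn.of_eq_const_add_mul {g w : ℝ → ℝ} {s : Set ℝ} {c₁ c₂ : ℝ}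
    (hg : MonotoneOrAntitoneOn g s) (hw : ∀ t ∈ s, w t = c₁ + c₂ * g t) :
    MonotoneOrAntitoneOn w s := by
  have hdiff : ∀ x ∈ s, ∀ y ∈ s, w y - w x = c₂ * (g y - g x) := fun x hx y hy => by
    rw [hw x hx, hw y hy]
    ring
  rcases le_total 0 c₂ with hc | hc <;> rcases hg with hg | hg
  · exact Or.inl fun x hx y hy hxy => by nlinarith [hdiff x hx y hy, hg hx hy hxy]
  · exact Or.inr fun x hx y hy hxy => by nlinarith [hdiff x hx y hy, hg hx hy hxy]
  · exact Or.inr fun x hx y hy hxy => by nlinarith [hdiff x hx y hy, hg hx hy hxy]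
  · exact Or.inl fun x hx y hy hxy => by nlinarith [hdiff x hx y hy, hg hx hy hxy]

theorem setLIntegral_Ico_ofReal_eq_intervalIntegral {f : ℝ → ℝ} (hf : Continuous f) (hnn : 0 ≤ f)
    {a b : ℝ} (hab : a ≤ b) :
    ∫⁻ x in Ico a b, ENNReal.ofReal (f x) = ENNReal.ofReal (∫ x in a..b, f x) := by
  rw [setLIntegral_congr Ico_ae_eq_Ioc, intervalIntegral.integral_of_le hab,
    ofReal_integral_eq_lintegral_ofReal (hf.integrableOn_Icc.mono_set Ioc_subset_Icc_self)
      (ae_of_all _ hnn)]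

theorem setLIntegral_Ico_sq_sub_comp_sub_le {w : ℝ → ℝ} (hw : Continuous w) {a' a b z : ℝ}
    (hz : 0 ≤ z) (hza : z ≤ a - a') (hzb : z ≤ b - a)
    (hprev : MonotoneOrAntitoneOn w (Icc a' a)) (hcur : MonotoneOrAntitoneOn w (Icc a b)) :
    ∫⁻ x in Ico a b, ENNReal.ofReal ((w x - w (x - z)) ^ 2)
      ≤ ENNReal.ofReal z *
          (2 * ENNReal.ofReal ((w a - w a') ^ 2) + 3 * ENNReal.ofReal ((w b - w a) ^ 2)) := by
  rw [← Ico_union_Ico_eq_Ico (le_add_of_nonneg_right hz) (by linarith : a + z ≤ b),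
    lintegral_union measurableSet_Ico Ico_disjoint_Ico_same]
  -- on the first strip `x` and `x - z` lie in adjacent cells, so compare both with `w a`
  have hstrip : ∫⁻ x in Ico a (a + z), ENNReal.ofReal ((w x - w (x - z)) ^ 2)
      ≤ ENNReal.ofReal z *
          (2 * ENNReal.ofReal ((w a - w a') ^ 2) + 2 * ENNReal.ofReal ((w b - w a) ^ 2)) := by
    calc ∫⁻ x in Ico a (a + z), ENNReal.ofReal ((w x - w (x - z)) ^ 2)
        ≤ ∫⁻ _ in Ico a (a + z),
            (2 * ENNReal.ofReal ((w b - w a) ^ 2) + 2 * ENNReal.ofReal ((w a - w a') ^ 2)) := by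
          refine setLIntegral_mono' measurableSet_Ico fun x ⟨hax, hxa⟩ => ?_
          have hcurx := sq_sub_le_sq_sub_of_mem_uIcc (hcur.mem_uIcc ⟨hax, by linarith⟩)
            left_mem_uIcc
          have hprevx := sq_sub_le_sq_sub_of_mem_uIcc right_mem_uIcc
            (hprev.mem_uIcc ⟨by linarith, by linarith⟩ : w (x - z) ∈ _)
          calc ENNReal.ofReal ((w x - w (x - z)) ^ 2)
              = ENNReal.ofReal ((w x - w a + (w a - w (x - z))) ^ 2) := by ring_nf
            _ ≤ _ := ENNReal.ofReal_sq_add_le _ _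
            _ ≤ _ := by gcongr
      _ = _ := by
          rw [setLIntegral_const, Real.volume_Ico, add_sub_cancel_left, mul_comm, add_comm]
  have hrest : ∫⁻ x in Ico (a + z) b, ENNReal.ofReal ((w x - w (x - z)) ^ 2)
      ≤ ENNReal.ofReal z * ENNReal.ofReal ((w b - w a) ^ 2) := by
    rw [setLIntegral_Ico_ofReal_eq_intervalIntegral (f := fun x => (w x - w (x - z)) ^ 2)
      (by fun_prop) (fun x => sq_nonneg _) (by linarith), ← ENNReal.ofReal_mul hz]
    exact ENNReal.ofReal_le_ofReal (hcur.integral_sq_sub_comp_sub_le hw hz hzb)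
  calc _ ≤ _ := add_le_add hstrip hrest
    _ = _ := by ring

theorem le_setLIntegral_Ico_sq_of_affine {g : ℝ → ℝ} {a b c d : ℝ} (hab : a ≤ b)
    (hg : ∀ x ∈ Icc a b, g x = c + d * x) :
    ENNReal.ofReal ((b - a) / 6 * (g a ^ 2 + g b ^ 2))
      ≤ ∫⁻ x in Ico a b, ENNReal.ofReal (g x ^ 2) := by
  have hexpand : ∀ x : ℝ, (c + d * x) ^ 2 = c ^ 2 + (2 * c * d) * x + d ^ 2 * x ^ 2 :=
    fun x => by ring
  have hint : ∫ x in a..b, (c + d * x) ^ 2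
      = c ^ 2 * (b - a) + c * d * (b ^ 2 - a ^ 2) + d ^ 2 * (b ^ 3 - a ^ 3) / 3 := by
    simp only [hexpand]
    rw [intervalIntegral.integral_add (Continuous.intervalIntegrable (by fun_prop) _ _)
        (Continuous.intervalIntegrable (by fun_prop) _ _),
      intervalIntegral.integral_add (Continuous.intervalIntegrable (by fun_prop) _ _)
        (Continuous.intervalIntegrable (by fun_prop) _ _),
      intervalIntegral.integral_const, intervalIntegral.integral_const_mul,
      intervalIntegral.integral_const_mul, integral_id, integral_pow, smul_eq_mul]
    ring
  rw [setLIntegral_congr_fun measurableSet_Ico fun x hx => by rw [hg x (Ico_subset_Icc_self hx)],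
    setLIntegral_Ico_ofReal_eq_intervalIntegral (f := fun x => (c + d * x) ^ 2) (by fun_prop)
      (fun x => sq_nonneg _) hab, hint,
    hg a ⟨le_rfl, hab⟩, hg b ⟨hab, le_rfl⟩]
  -- the exact value is `(b - a) (g a ^ 2 + g a g b + g b ^ 2) / 3`
  exact ENNReal.ofReal_le_ofReal (by
    nlinarith [mul_nonneg (sub_nonneg.2 hab) (sq_nonneg (2 * c + d * a + d * b))])

def PWMonotoneZ (τ : ℝ) (w : ℝ → ℝ) : Prop :=
  ∀ k : ℤ, MonotoneOrAntitoneOn w (Icc ((k : ℝ) * τ) (((k : ℝ) + 1) * τ))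

def nodeIncrement (τ : ℝ) (w : ℝ → ℝ) (k : ℤ) : ℝ :=
  w (((k : ℝ) + 1) * τ) - w ((k : ℝ) * τ)

noncomputable def sumSqIncrements (τ : ℝ) (w : ℝ → ℝ) : ℝ≥0∞ :=
  ∑' k : ℤ, ENNReal.ofReal (nodeIncrement τ w k ^ 2)

theorem lintegral_eq_tsum_cells {τ : ℝ} (hτ : 0 < τ) (f : ℝ → ℝ≥0∞) :
    ∫⁻ x, f x = ∑' k : ℤ, ∫⁻ x in Ico ((k : ℝ) * τ) (((k : ℝ) + 1) * τ), f x := by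
  have hcover := iUnion_Ico_zsmul hτ
  have hdisj := pairwise_disjoint_Ico_zsmul τ
  simp only [zsmul_eq_mul, Int.cast_add, Int.cast_one] at hcover hdisj
  rw [← lintegral_iUnion (fun _ => measurableSet_Ico) hdisj, hcover, Measure.restrict_univ]

section Grid

variable {τ : ℝ} {u v w : ℝ → ℝ}

theorem PWAffineZ.pwMonotoneZ (hu : PWAffineZ τ u) : PWMonotoneZ τ u := fun k =>
  let ⟨_, _, hc⟩ := hu k
  MonotoneOrAntitoneOn.of_eq_const_add_mul (g := id) (Or.inl monotoneOn_id) hc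

theorem UpwindZ.pwMonotoneZ {α β : ℝ} (hv : UpwindZ α β τ v) : PWMonotoneZ τ v := by
  intro k
  obtain ⟨_, _, hc⟩ := hv k
  refine MonotoneOrAntitoneOn.of_eq_const_add_mul ?_ hc
  simp only [neg_mul_eq_neg_mul, mul_div_right_comm]
  rcases le_total 0 (-β / α) with h | h
  · exact Or.inl fun x _ y _ hxy => Real.exp_le_exp.2 (mul_le_mul_of_nonneg_left hxy h)
  · exact Or.inr fun x _ y _ hxy => Real.exp_le_exp.2 (mul_le_mul_of_nonpos_left hxy h)

theorem nodeIncrement_sub_one (τ : ℝ) (w : ℝ → ℝ) (k : ℤ) :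
    nodeIncrement τ w (k - 1) = w (k * τ) - w (k * τ - τ) := by
  simp [nodeIncrement, sub_one_mul]

theorem tsum_nodeIncrement_adjacent (a b : ℝ≥0∞) :
    ∑' k : ℤ, (a * ENNReal.ofReal (nodeIncrement τ w (k - 1) ^ 2)
        + b * ENNReal.ofReal (nodeIncrement τ w k ^ 2))
      = (a + b) * sumSqIncrements τ w := by
  have hshift : ∑' k : ℤ, ENNReal.ofReal (nodeIncrement τ w (k - 1) ^ 2) = sumSqIncrements τ w :=
    (Equiv.subRight (1 : ℤ)).tsum_eq fun k => ENNReal.ofReal (nodeIncrement τ w k ^ 2)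
  rw [ENNReal.tsum_add, ENNReal.tsum_mul_left, ENNReal.tsum_mul_left, hshift, add_mul]
  rfl

theorem nodeIncrement_eq_of_eq_on_nodes (h : ∀ k : ℤ, v (k * τ) = u (k * τ)) :
    nodeIncrement τ v = nodeIncrement τ u := by
  funext k
  have hsucc := h (k + 1)
  push_cast at hsucc
  simp only [nodeIncrement, hsucc, h k]

theorem PWMonotoneZ.shiftDiffSq_le (hmono : PWMonotoneZ τ w) (hw : Continuous w) (hτ : 0 < τ)
    {z : ℝ} (hz : 0 ≤ z) (hzτ : z ≤ τ) :
    shiftDiffSq w z ≤ 5 * ENNReal.ofReal z * sumSqIncrements τ w := by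
  rw [shiftDiffSq, lintegral_eq_tsum_cells hτ]
  calc _ ≤ ∑' k : ℤ, ENNReal.ofReal z * (2 * ENNReal.ofReal (nodeIncrement τ w (k - 1) ^ 2)
            + 3 * ENNReal.ofReal (nodeIncrement τ w k ^ 2)) := by
        refine ENNReal.tsum_le_tsum fun k => ?_
        have hprev := hmono (k - 1)
        push_cast at hprev
        rw [sub_add_cancel, sub_one_mul] at hprev
        rw [nodeIncrement_sub_one, nodeIncrement]
        exact setLIntegral_Ico_sq_sub_comp_sub_le hw hz (by linarith) (by linarith) hprev (hmono k)
    _ = 5 * ENNReal.ofReal z * sumSqIncrements τ w := by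
        rw [ENNReal.tsum_mul_left, tsum_nodeIncrement_adjacent]
        ring

theorem lintegral_sq_sub_le_of_eq_on_nodes (hτ : 0 < τ) (hu : PWMonotoneZ τ u)
    (hv : PWMonotoneZ τ v) (h : ∀ k : ℤ, v (k * τ) = u (k * τ)) :
    ∫⁻ x, ENNReal.ofReal ((v x - u x) ^ 2) ≤ ENNReal.ofReal τ * sumSqIncrements τ u := by
  rw [lintegral_eq_tsum_cells hτ, sumSqIncrements, ← ENNReal.tsum_mul_left]
  refine ENNReal.tsum_le_tsum fun k => ?_
  have hsucc := h (k + 1)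
  push_cast at hsucc
  calc ∫⁻ x in Ico ((k : ℝ) * τ) (((k : ℝ) + 1) * τ), ENNReal.ofReal ((v x - u x) ^ 2)
      ≤ ∫⁻ _ in Ico ((k : ℝ) * τ) (((k : ℝ) + 1) * τ),
          ENNReal.ofReal (nodeIncrement τ u k ^ 2) := by
        refine setLIntegral_mono' measurableSet_Ico fun x hx => ENNReal.ofReal_le_ofReal ?_
        have hvx := (hv k).mem_uIcc (Ico_subset_Icc_self hx)
        rw [h k, hsucc] at hvx
        exact sq_sub_le_sq_sub_of_mem_uIcc hvx ((hu k).mem_uIcc (Ico_subset_Icc_self hx))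
    _ = ENNReal.ofReal τ * ENNReal.ofReal (nodeIncrement τ u k ^ 2) := by
        rw [setLIntegral_const, Real.volume_Ico, mul_comm]
        ring_nf

theorem PWAffineZ.sub_comp_sub_eq_affine (hu : PWAffineZ τ u) (k : ℤ) :
    ∃ c d : ℝ, ∀ x ∈ Icc ((k : ℝ) * τ) (((k : ℝ) + 1) * τ), u x - u (x - τ) = c + d * x := by
  obtain ⟨A, B, hAB⟩ := hu k
  obtain ⟨A', B', hAB'⟩ := hu (k - 1)
  refine ⟨A - A' + B' * τ, B - B', fun x hx => ?_⟩
  rw [hAB x hx, hAB' (x - τ) ⟨by push_cast; linarith [hx.1], by push_cast; linarith [hx.2]⟩]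
  ring

theorem PWAffineZ.ofReal_mul_sumSqIncrements_le (hu : PWAffineZ τ u) (hτ : 0 < τ) :
    ENNReal.ofReal τ * sumSqIncrements τ u ≤ 3 * shiftDiffSq u τ := by
  have hcell : ∀ k : ℤ, ENNReal.ofReal (τ / 6) * ENNReal.ofReal (nodeIncrement τ u (k - 1) ^ 2)
        + ENNReal.ofReal (τ / 6) * ENNReal.ofReal (nodeIncrement τ u k ^ 2)
      ≤ ∫⁻ x in Ico ((k : ℝ) * τ) (((k : ℝ) + 1) * τ), ENNReal.ofReal ((u x - u (x - τ)) ^ 2) := by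
    intro k
    obtain ⟨c, d, hcd⟩ := hu.sub_comp_sub_eq_affine k
    have hbound := le_setLIntegral_Ico_sq_of_affine (by nlinarith) hcd
    rw [show ((k : ℝ) + 1) * τ - k * τ = τ by ring, show ((k : ℝ) + 1) * τ - τ = k * τ by ring]
      at hbound
    rwa [← mul_add, ← ENNReal.ofReal_add (sq_nonneg _) (sq_nonneg _),
      ← ENNReal.ofReal_mul (by positivity), nodeIncrement_sub_one, nodeIncrement]
  calc ENNReal.ofReal τ * sumSqIncrements τ u
      = 3 * ((ENNReal.ofReal (τ / 6) + ENNReal.ofReal (τ / 6)) * sumSqIncrements τ u) := by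
        rw [← ENNReal.ofReal_add (by positivity) (by positivity), ← mul_assoc,
          ← ENNReal.ofReal_ofNat 3, ← ENNReal.ofReal_mul (by norm_num)]
        ring_nf
    _ ≤ 3 * shiftDiffSq u τ := by
        rw [← tsum_nodeIncrement_adjacent, shiftDiffSq, lintegral_eq_tsum_cells hτ]
        exact mul_le_mul_right (ENNReal.tsum_le_tsum hcell) 3

theorem PWAffineZ.sumSqIncrements_le (hu : PWAffineZ τ u) (hτ : 0 < τ) (hum : Measurable u) :
    sumSqIncrements τ u ≤ 12 * slobHalfSq u := by
  refine (ENNReal.mul_le_mul_iff_right (by simpa using hτ) ENNReal.ofReal_ne_top).1 ?_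
  calc ENNReal.ofReal τ * sumSqIncrements τ u ≤ 3 * shiftDiffSq u τ :=
        hu.ofReal_mul_sumSqIncrements_le hτ
    _ ≤ 3 * (4 * ENNReal.ofReal τ * slobHalfSq u) :=
        mul_le_mul_right (shiftDiffSq_le_mul_slobHalfSq hum hτ) 3
    _ = ENNReal.ofReal τ * (12 * slobHalfSq u) := by ring

end Grid

theorem shiftDiffSq_le_of_eq_on_nodes {τ z : ℝ} {u v : ℝ → ℝ} (hτ : 0 < τ) (hz : 0 ≤ z)
    (hu : Measurable u) (hPW : PWAffineZ τ u) (hv : Continuous v) (hvmono : PWMonotoneZ τ v)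
    (hvu : ∀ k : ℤ, v (k * τ) = u (k * τ)) :
    shiftDiffSq v z ≤ 121 * ENNReal.ofReal z * slobHalfSq u := by
  have hD := hPW.sumSqIncrements_le hτ hu
  rcases le_or_gt z τ with hzτ | hτz
  · calc shiftDiffSq v z ≤ 5 * ENNReal.ofReal z * sumSqIncrements τ v :=
          hvmono.shiftDiffSq_le hv hτ hz hzτ
      _ = 5 * ENNReal.ofReal z * sumSqIncrements τ u := by
          rw [sumSqIncrements, sumSqIncrements, nodeIncrement_eq_of_eq_on_nodes hvu]
      _ ≤ 5 * ENNReal.ofReal z * (12 * slobHalfSq u) := by gcongr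
      _ ≤ 121 * ENNReal.ofReal z * slobHalfSq u := by
          ring_nf
          gcongr
          norm_num
  · have hW := lintegral_sq_sub_le_of_eq_on_nodes hτ hPW.pwMonotoneZ hvmono hvu
    calc shiftDiffSq v z = shiftDiffSq (u + (v - u)) z := by rw [add_sub_cancel]
      _ ≤ 2 * shiftDiffSq u z + 2 * shiftDiffSq (v - u) z := shiftDiffSq_add_le hu _ z
      _ ≤ 2 * (4 * ENNReal.ofReal z * slobHalfSq u)
            + 2 * (4 * (ENNReal.ofReal τ * (12 * slobHalfSq u))) := by
          gcongr
          · exact shiftDiffSq_le_mul_slobHalfSq hu (hτ.trans hτz)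
          · exact (shiftDiffSq_le_four_mul (hv.measurable.sub hu) z).trans
              (mul_le_mul_right (hW.trans (mul_le_mul_right hD _)) 4)
      _ ≤ 2 * (4 * ENNReal.ofReal z * slobHalfSq u)
            + 2 * (4 * (ENNReal.ofReal z * (12 * slobHalfSq u))) := by
          gcongr
      _ ≤ 121 * ENNReal.ofReal z * slobHalfSq u := by
          ring_nf
          gcongr
          norm_num

/-- **Weak `H^{1/2}` bound for the upwinded interpolant, uniformly in `α`, `β`, `τ`:**
there is `C > 0` such that for all `α, β, τ > 0`, every continuous `τ`-piecewise affine
`u ∈ L²(ℝ)` with finite Slobodetski seminorm and `v` its upwinded interpolant,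
`‖v − v(· − y)‖²_{L²} ≤ C² |y| |u|²_{H^{1/2}}` for all `y ∈ ℝ`. -/
theorem upwind_interpolant_weakHalf_bound :
    ∃ C > (0 : ℝ), ∀ α β τ : ℝ, 0 < α → 0 < β → 0 < τ →
      ∀ u v : ℝ → ℝ,
        Continuous u → PWAffineZ τ u → MemLp u 2 volume → slobHalfSq u < ⊤ →
        Continuous v → (∀ k : ℤ, v ((k : ℝ) * τ) = u ((k : ℝ) * τ)) →
        UpwindZ α β τ v →
        ∀ y : ℝ,
          (∫⁻ x : ℝ, ENNReal.ofReal ((v x - v (x - y)) ^ 2))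
            ≤ ENNReal.ofReal (C ^ 2 * |y|) * slobHalfSq u := by
  refine ⟨11, by norm_num, fun _ _ τ _ _ hτ u v hu hPW _ _ hv hvu hUp y => ?_⟩
  calc shiftDiffSq v y = shiftDiffSq v |y| := (shiftDiffSq_abs v y).symm
    _ ≤ 121 * ENNReal.ofReal |y| * slobHalfSq u :=
        shiftDiffSq_le_of_eq_on_nodes hτ (abs_nonneg y) hu.measurable hPW hv hUp.pwMonotoneZ hvu
    _ = ENNReal.ofReal (11 ^ 2 * |y|) * slobHalfSq u := by
        rw [ENNReal.ofReal_mul (by norm_num)]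
        norm_num
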